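/- arXiv:2501.18236 — 4 statements merged into one kernel-verified Lean document; each statement's English description precedes it below -/
import Mathlib

section
/- The semantic security advantage is bounded above by the distinguishing security advantage: Adv_ss(P) ≤ Adv_ds(P). That is, sup over probability distributions P_M on the finite message set M, over partitions Π of M, and over measurable maps g : Z → Π of the quantity ( Σ_{m∈M} P_M({m}) · P_m({z : m ∈ g(z)}) − max_{π∈Π} P_M(π) ) is at most max_{m₁,m₂∈M} ‖P_{m₁} − P_{m₂}‖_TV. -/
/-!
Fix a reference message `m₀`. On every event, each `P m` differs from `P m₀` by at most the
distinguishing advantage `D`, so replacing `P m` by `P m₀` in the success probability costs at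
most `D`. But against the single distribution `P m₀` the observation `z` carries no information
about `m`: the guess `g z` succeeds with probability `∑ m ∈ g z, p m ≤ max_π p(π)` pointwise,
and averaging over `z` keeps this bound.
-/

open MeasureTheory

/-- Total variation distance between two measures. -/
noncomputable def tvDist {Ω : Type*} [MeasurableSpace Ω] (P Q : Measure Ω) : ℝ :=
  ⨆ A : {A : Set Ω // MeasurableSet A}, |(P A.1).toReal - (Q A.1).toReal|

theorem le_ciSup_mem_of_finite {α ι : Type*} [ConditionallyCompleteLattice α] [Finite ι]
    (f : ι → α) {s : Set ι} {i : ι} (hi : i ∈ s) : f i ≤ ⨆ j ∈ s, f j :=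
  (ciSup_pos (p := i ∈ s) (f := fun _ => f i) hi).symm.le.trans
    (le_ciSup (f := fun j => ⨆ _ : j ∈ s, f j) (Set.finite_range _).bddAbove i)

theorem MeasurableSet.preimage_of_countable_fibers {Z β : Type*} [MeasurableSpace Z]
    [Countable β] {g : Z → β} (hg : ∀ b, MeasurableSet {z | g z = b}) (S : Set β) :
    MeasurableSet (g ⁻¹' S) := by
  rw [← Set.biUnion_preimage_singleton]
  exact .biUnion S.to_countable fun b _ => hg b

namespace MeasureTheory.Measure

variable {Ω : Type*} [MeasurableSpace Ω]

theorem abs_sub_le_tvDist (P Q : Measure Ω) [IsFiniteMeasure P] [IsFiniteMeasure Q]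
    {A : Set Ω} (hA : MeasurableSet A) :
    |(P A).toReal - (Q A).toReal| ≤ tvDist P Q := by
  refine le_ciSup (f := fun B : {B : Set Ω // MeasurableSet B} =>
      |(P B.1).toReal - (Q B.1).toReal|) ⟨(P Set.univ).toReal + (Q Set.univ).toReal, ?_⟩ ⟨A, hA⟩
  rintro _ ⟨⟨B, -⟩, rfl⟩
  calc |(P B).toReal - (Q B).toReal| ≤ (P B).toReal + (Q B).toReal :=
        abs_sub_le_of_nonneg_of_le ENNReal.toReal_nonneg
          (le_add_of_nonneg_right ENNReal.toReal_nonneg) ENNReal.toReal_nonneg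
          (le_add_of_nonneg_left ENNReal.toReal_nonneg)
    _ ≤ (P Set.univ).toReal + (Q Set.univ).toReal :=
        add_le_add (measureReal_mono B.subset_univ) (measureReal_mono B.subset_univ)

end MeasureTheory.Measure

theorem sum_mul_measure_mem_le {Z M : Type*} [MeasurableSpace Z] [Fintype M]
    (μ : Measure Z) [IsProbabilityMeasure μ] {g : Z → Finset M}
    (hg : ∀ m, MeasurableSet {z | m ∈ g z}) (p : M → ℝ) {c : ℝ}
    (hc : ∀ z, ∑ m ∈ g z, p m ≤ c) :
    ∑ m, p m * (μ {z | m ∈ g z}).toReal ≤ c := by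
  classical
  have hint m : Integrable ({z | m ∈ g z}.indicator fun _ => p m) μ :=
    (integrable_const (p m)).indicator (hg m)
  have hsum z : ∑ m, {z | m ∈ g z}.indicator (fun _ => p m) z = ∑ m ∈ g z, p m := by
    simp only [Set.indicator_apply, Set.mem_ofPred_eq, Finset.sum_ite_mem, Finset.univ_inter]
  calc ∑ m, p m * (μ {z | m ∈ g z}).toReal
      = ∫ z, ∑ m, {z | m ∈ g z}.indicator (fun _ => p m) z ∂μ := by
        rw [integral_finsetSum _ fun m _ => hint m]
        simp [integral_indicator_const _ (hg _), measureReal_def, mul_comm]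
    _ ≤ ∫ _, c ∂μ := integral_mono (integrable_finsetSum _ fun m _ => hint m)
        (integrable_const c) fun z => (hsum z).trans_le (hc z)
    _ = c := by simp

theorem semantic_le_distinguishing_general
    {M : Type*} [Fintype M] [Nonempty M]
    {Z : Type*} [MeasurableSpace Z]
    (P : M → Measure Z) (hP : ∀ m, IsProbabilityMeasure (P m))
    (p : M → ℝ) (hp0 : ∀ m, 0 ≤ p m) (hp1 : ∑ m, p m = 1)
    (Part : Finset (Finset M))
    (g : Z → Finset M) (hg : ∀ z, g z ∈ Part)
    (hgmeas : ∀ π : Finset M, MeasurableSet {z | g z = π}) :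
    (∑ m, p m * (P m {z | m ∈ g z}).toReal)
        - (⨆ π ∈ (Part : Set (Finset M)), ∑ m ∈ π, p m)
      ≤ ⨆ mm : M × M, tvDist (P mm.1) (P mm.2) := by
  obtain ⟨m₀⟩ := ‹Nonempty M›
  have := hP
  set W := ⨆ π ∈ (Part : Set (Finset M)), ∑ m ∈ π, p m
  set D := ⨆ mm : M × M, tvDist (P mm.1) (P mm.2)
  have hA m : MeasurableSet {z | m ∈ g z} :=
    MeasurableSet.preimage_of_countable_fibers hgmeas {π | m ∈ π}
  have hshift m : (P m {z | m ∈ g z}).toReal ≤ (P m₀ {z | m ∈ g z}).toReal + D := by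
    have := (le_abs_self _).trans ((P m).abs_sub_le_tvDist (P m₀) (hA m))
    have : tvDist (P m) (P m₀) ≤ D := le_ciSup (f := fun mm : M × M => tvDist (P mm.1) (P mm.2))
      (Set.finite_range _).bddAbove (m, m₀)
    linarith
  have hW z : ∑ m ∈ g z, p m ≤ W := le_ciSup_mem_of_finite (fun π => ∑ m ∈ π, p m) (hg z)
  calc (∑ m, p m * (P m {z | m ∈ g z}).toReal) - W
      ≤ (∑ m, p m * ((P m₀ {z | m ∈ g z}).toReal + D)) - W := by
        gcongr with m; exacts [hp0 m, hshift m]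
    _ = (∑ m, p m * (P m₀ {z | m ∈ g z}).toReal) - W + D := by
        simp only [mul_add, Finset.sum_add_distrib, ← Finset.sum_mul, hp1, one_mul]; ring
    _ ≤ D := by linarith [sum_mul_measure_mem_le (P m₀) hA p hW]

/-- The semantic security advantage is bounded above by the distinguishing security
advantage: every choice of message distribution `p`, partition `Part` of the message set,
and measurable guessing map `g` yields an advantage at most
`max_{m₁,m₂} ‖P m₁ − P m₂‖_TV`. -/
theorem semantic_le_distinguishing
    {M : Type*} [Fintype M] [Nonempty M] [DecidableEq M]
    {Z : Type*} [MeasurableSpace Z]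
    (P : M → Measure Z) (hP : ∀ m, IsProbabilityMeasure (P m))
    (p : M → ℝ) (hp0 : ∀ m, 0 ≤ p m) (hp1 : ∑ m, p m = 1)
    (Part : Finset (Finset M))
    (hne : ∀ π ∈ Part, π.Nonempty)
    (hdisj : ∀ π₁ ∈ Part, ∀ π₂ ∈ Part, π₁ ≠ π₂ → Disjoint π₁ π₂)
    (hcover : ∀ m : M, ∃ π ∈ Part, m ∈ π)
    (g : Z → Finset M) (hg : ∀ z, g z ∈ Part)
    (hgmeas : ∀ π : Finset M, MeasurableSet {z | g z = π}) :
    (∑ m, p m * (P m {z | m ∈ g z}).toReal)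
        - (⨆ π ∈ (Part : Set (Finset M)), ∑ m ∈ π, p m)
      ≤ ⨆ mm : M × M, tvDist (P mm.1) (P mm.2) :=
  semantic_le_distinguishing_general P hP p hp0 hp1 Part g hg hgmeas
end

section
/- The distinguishing security advantage is bounded above by twice the semantic security advantage: Adv_ds(P) ≤ 2 · Adv_ss(P). That is, max_{m₁,m₂∈M} ‖P_{m₁} − P_{m₂}‖_TV is at most 2 · sup over probability distributions P_M on M, partitions Π of M, and measurable maps g : Z → Π of ( Σ_{m∈M} P_M({m}) · P_m({z : m ∈ g(z)}) − max_{π∈Π} P_M(π) ). -/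
open MeasureTheory

-- For `b ∉ s` the inner supremum is `sSup ∅ = 0`, so the left side is `max 0 (s.sup' hs f)`.
theorem Real.biSup_finset_eq_sup' {β : Type*} {s : Finset β} (hs : s.Nonempty) {f : β → ℝ}
    (hf : ∀ b ∈ s, 0 ≤ f b) : ⨆ b ∈ (s : Set β), f b = s.sup' hs f := by
  have h₀ : 0 ≤ s.sup' hs f :=
    hs.elim fun b hb => (hf b hb).trans (s.le_sup' f hb)
  have hle : ∀ b, ⨆ _ : b ∈ (s : Set β), f b ≤ s.sup' hs f :=
    fun b => Real.iSup_le (fun hb => s.le_sup' f hb) h₀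
  refine le_antisymm (Real.iSup_le hle h₀) (Finset.sup'_le hs f fun b hb => ?_)
  exact le_ciSup_of_le ⟨_, Set.forall_mem_range.2 hle⟩ b (ciSup_pos (f := fun _ => f b) hb).ge

theorem measurableSet_ite_eq {α β : Type*} [MeasurableSpace α] {A : Set α}
    [DecidablePred (· ∈ A)] (hA : MeasurableSet A) (b₁ b₂ c : β) :
    MeasurableSet {z | (if z ∈ A then b₁ else b₂) = c} :=
  let _ : MeasurableSpace β := ⊤
  Measurable.ite (p := (· ∈ A)) hA measurable_const measurable_const
    (MeasurableSpace.measurableSet_top (s := {c}))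

section SemanticSecurity

variable {M : Type*} [Fintype M] {Z : Type*} [MeasurableSpace Z]

def semanticAdvantages (P : M → Measure Z) : Set ℝ :=
  {a : ℝ | ∃ (p : M → ℝ) (Part : Finset (Finset M)) (g : Z → Finset M),
    (∀ m, 0 ≤ p m) ∧ (∑ m, p m = 1) ∧
    (∀ π ∈ Part, π.Nonempty) ∧
    (∀ π₁ ∈ Part, ∀ π₂ ∈ Part, π₁ ≠ π₂ → Disjoint π₁ π₂) ∧
    (∀ m : M, ∃ π ∈ Part, m ∈ π) ∧
    (∀ z, g z ∈ Part) ∧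
    (∀ π : Finset M, MeasurableSet {z | g z = π}) ∧
    a = (∑ m, p m * (P m {z | m ∈ g z}).toReal)
      - (⨆ π ∈ (Part : Set (Finset M)), ∑ m ∈ π, p m)}

theorem semanticAdvantages_bddAbove (P : M → Measure Z) (hP : ∀ m, IsProbabilityMeasure (P m)) :
    BddAbove (semanticAdvantages P) := by
  refine ⟨1, ?_⟩
  rintro _ ⟨p, Part, g, hp₀, hp₁, -, -, -, -, -, rfl⟩
  have hguess : ∑ m, p m * (P m {z | m ∈ g z}).toReal ≤ 1 :=
    calc ∑ m, p m * (P m {z | m ∈ g z}).toReal ≤ ∑ m, p m :=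
          Finset.sum_le_sum fun m _ => mul_le_of_le_one_right (hp₀ m) measureReal_le_one
      _ = 1 := hp₁
  have hmax : 0 ≤ ⨆ π ∈ (Part : Set (Finset M)), ∑ m ∈ π, p m :=
    Real.iSup_nonneg fun π => Real.iSup_nonneg fun _ => Finset.sum_nonneg fun m _ => hp₀ m
  linarith

theorem zero_mem_semanticAdvantages [Nonempty M] (P : M → Measure Z)
    (hP : ∀ m, IsProbabilityMeasure (P m)) : (0 : ℝ) ∈ semanticAdvantages P := by
  have hcard : (Fintype.card M : ℝ) ≠ 0 := Nat.cast_ne_zero.2 Fintype.card_ne_zero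
  have hp₁ : ∑ _m : M, (Fintype.card M : ℝ)⁻¹ = 1 := by
    rw [Finset.sum_const, Finset.card_univ, nsmul_eq_mul, mul_inv_cancel₀ hcard]
  refine ⟨fun _ => (Fintype.card M : ℝ)⁻¹, {Finset.univ}, fun _ => Finset.univ,
    fun _ => by positivity, hp₁, by simp, by simp, by simp, by simp,
    fun π => MeasurableSet.const _, ?_⟩
  rw [Real.biSup_finset_eq_sup' (Finset.singleton_nonempty _) (by simp), Finset.sup'_singleton]
  simp [hp₁]

theorem binaryTest_mem_semanticAdvantages [DecidableEq M] (P : M → Measure Z) {p : M → ℝ}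
    (hp₀ : ∀ m, 0 ≤ p m) (hp₁ : ∑ m, p m = 1) {S : Finset M} (hS : S.Nonempty)
    (hSc : Sᶜ.Nonempty) {A : Set Z} (hA : MeasurableSet A) :
    ∑ m, p m * (P m (if m ∈ S then A else Aᶜ)).toReal
      - max (∑ m ∈ S, p m) (∑ m ∈ Sᶜ, p m) ∈ semanticAdvantages P := by
  classical
  refine ⟨p, {S, Sᶜ}, fun z => if z ∈ A then S else Sᶜ, hp₀, hp₁, by simp [hS, hSc], ?_, ?_,
    fun z => by by_cases hz : z ∈ A <;> simp [hz], fun π => measurableSet_ite_eq hA S Sᶜ π, ?_⟩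
  · simp only [Finset.mem_insert, Finset.mem_singleton]
    rintro π₁ (rfl | rfl) π₂ (rfl | rfl) hne
    exacts [absurd rfl hne, disjoint_compl_right, disjoint_compl_left, absurd rfl hne]
  · intro m
    by_cases hm : m ∈ S
    exacts [⟨S, by simp, hm⟩, ⟨Sᶜ, by simp, Finset.mem_compl.2 hm⟩]
  · have hguess : ∀ m, {z | m ∈ if z ∈ A then S else Sᶜ} = if m ∈ S then A else Aᶜ := by
      intro m
      ext z
      by_cases hm : m ∈ S <;> by_cases hz : z ∈ A <;> simp [hm, hz]
    rw [Real.biSup_finset_eq_sup' (Finset.insert_nonempty _ _)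
        (fun π _ => Finset.sum_nonneg fun m _ => hp₀ m),
      Finset.sup'_insert (Finset.singleton_nonempty _), Finset.sup'_singleton]
    simp only [hguess]

theorem half_sub_mem_semanticAdvantages (P : M → Measure Z)
    (hP : ∀ m, IsProbabilityMeasure (P m)) {m₁ m₂ : M} (hne : m₁ ≠ m₂) {A : Set Z}
    (hA : MeasurableSet A) :
    ((P m₁ A).toReal - (P m₂ A).toReal) / 2 ∈ semanticAdvantages P := by
  classical
  set p : M → ℝ := fun m => (if m = m₁ then 1 / 2 else 0) + (if m = m₂ then 1 / 2 else 0)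
  have hp : ∀ c : M → ℝ, ∑ m, p m * c m = (c m₁ + c m₂) / 2 := by
    intro c
    simp only [p, add_mul, ite_mul, zero_mul, Finset.sum_add_distrib, Finset.sum_ite_eq',
      Finset.mem_univ, if_true]
    ring
  have hp₁ : ∑ m, p m = 1 := by simpa using hp 1
  convert binaryTest_mem_semanticAdvantages P (p := p) (fun m => by positivity) hp₁
    (Finset.singleton_nonempty m₁) ⟨m₂, by simpa using hne.symm⟩ hA using 1
  rw [hp]
  simp [p, Finset.sum_add_distrib, hne.symm, ← measureReal_def, probReal_compl_eq_one_sub hA]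
  ring

theorem sub_le_two_mul_sSup_semanticAdvantages [Nonempty M] (P : M → Measure Z)
    (hP : ∀ m, IsProbabilityMeasure (P m)) (m₁ m₂ : M) {A : Set Z} (hA : MeasurableSet A) :
    (P m₁ A).toReal - (P m₂ A).toReal ≤ 2 * sSup (semanticAdvantages P) := by
  have hbdd := semanticAdvantages_bddAbove P hP
  rcases eq_or_ne m₁ m₂ with rfl | hne
  · simpa using le_csSup hbdd (zero_mem_semanticAdvantages P hP)
  · linarith [le_csSup hbdd (half_sub_mem_semanticAdvantages P hP hne hA)]

end SemanticSecurity

theorem distinguishing_le_two_mul_semantic_general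
    {M : Type*} [Fintype M] [Nonempty M]
    {Z : Type*} [MeasurableSpace Z]
    (P : M → Measure Z) (hP : ∀ m, IsProbabilityMeasure (P m)) :
    (⨆ mm : M × M, tvDist (P mm.1) (P mm.2))
      ≤ 2 * sSup {a : ℝ |
          ∃ (p : M → ℝ) (Part : Finset (Finset M)) (g : Z → Finset M),
            (∀ m, 0 ≤ p m) ∧ (∑ m, p m = 1) ∧
            (∀ π ∈ Part, π.Nonempty) ∧
            (∀ π₁ ∈ Part, ∀ π₂ ∈ Part, π₁ ≠ π₂ → Disjoint π₁ π₂) ∧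
            (∀ m : M, ∃ π ∈ Part, m ∈ π) ∧
            (∀ z, g z ∈ Part) ∧
            (∀ π : Finset M, MeasurableSet {z | g z = π}) ∧
            a = (∑ m, p m * (P m {z | m ∈ g z}).toReal)
                  - (⨆ π ∈ (Part : Set (Finset M)), ∑ m ∈ π, p m)} :=
  ciSup_le fun _ => ciSup_le fun A =>
    abs_sub_le_iff.2 ⟨sub_le_two_mul_sSup_semanticAdvantages P hP _ _ A.2,
      sub_le_two_mul_sSup_semanticAdvantages P hP _ _ A.2⟩

/-- The distinguishing security advantage `max_{m₁,m₂} ‖P m₁ − P m₂‖_TV` is bounded above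
by twice the semantic security advantage, the latter being the supremum over message
distributions `p`, partitions `Part` of the message set, and measurable guessing maps `g`
of the eavesdropper's advantage over pure guessing. -/
theorem distinguishing_le_two_mul_semantic
    {M : Type*} [Fintype M] [Nonempty M] [DecidableEq M]
    {Z : Type*} [MeasurableSpace Z]
    (P : M → Measure Z) (hP : ∀ m, IsProbabilityMeasure (P m)) :
    (⨆ mm : M × M, tvDist (P mm.1) (P mm.2))
      ≤ 2 * sSup {a : ℝ |
          ∃ (p : M → ℝ) (Part : Finset (Finset M)) (g : Z → Finset M),
            (∀ m, 0 ≤ p m) ∧ (∑ m, p m = 1) ∧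
            (∀ π ∈ Part, π.Nonempty) ∧
            (∀ π₁ ∈ Part, ∀ π₂ ∈ Part, π₁ ≠ π₂ → Disjoint π₁ π₂) ∧
            (∀ m : M, ∃ π ∈ Part, m ∈ π) ∧
            (∀ z, g z ∈ Part) ∧
            (∀ π : Finset M, MeasurableSet {z | g z = π}) ∧
            a = (∑ m, p m * (P m {z | m ∈ g z}).toReal)
                  - (⨆ π ∈ (Part : Set (Finset M)), ∑ m ∈ π, p m)} :=
  distinguishing_le_two_mul_semantic_general P hP
end

section
/- For every J > 0, ∫_0^∞ exp( − t² / (2(1 + t/3)J) ) dt ≤ (√(3π)/2)·√J + 3J. -/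
/-!
For `t ≤ 1` the denominator `2 (1 + t/3) J` is at most `3J`, and for `t ≥ 1` the exponent
`t² / (2 (1 + t/3) J)` is at least `t / (3J)`. So the integrand is dominated by
`exp (-t²/(3J)) + exp (-t/(3J))`, whose integral over `(0, ∞)` is `√(3πJ)/2 + 3J`.
-/

open MeasureTheory Real Set

lemma integrableOn_exp_neg_sq_div_Ioi {c : ℝ} (hc : 0 < c) :
    IntegrableOn (fun t : ℝ => exp (-(t ^ 2) / c)) (Ioi 0) := by
  simp_rw [neg_div, div_eq_inv_mul, ← neg_mul]
  exact integrableOn_Ioi_exp_neg_mul_sq_iff.2 (inv_pos.2 hc)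

lemma integral_exp_neg_sq_div_Ioi (c : ℝ) :
    ∫ t in Ioi (0 : ℝ), exp (-(t ^ 2) / c) = √(π * c) / 2 := by
  simp_rw [neg_div, div_eq_inv_mul (_ ^ 2), ← neg_mul]
  rw [integral_gaussian_Ioi, div_inv_eq_mul]

lemma integrableOn_exp_neg_div_Ioi {c : ℝ} (hc : 0 < c) :
    IntegrableOn (fun t : ℝ => exp (-t / c)) (Ioi 0) := by
  simpa only [div_eq_inv_mul, neg_mul, mul_neg] using
    integrableOn_exp_mul_Ioi (neg_lt_zero.2 (inv_pos.2 hc)) 0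

lemma integral_exp_neg_div_Ioi {c : ℝ} (hc : 0 < c) :
    ∫ t in Ioi (0 : ℝ), exp (-t / c) = c := by
  have h := integral_exp_mul_Ioi (neg_lt_zero.2 (inv_pos.2 hc)) 0
  simp only [neg_mul, mul_zero, exp_zero, neg_div_neg_eq, one_div, inv_inv] at h
  simpa only [div_eq_inv_mul, neg_mul, mul_neg] using h

lemma exp_neg_sq_div_le_of_le {t J : ℝ} (ht : 0 ≤ t) (hJ : 0 < J) (ht' : t ≤ 3 / 2) :
    exp (-(t ^ 2) / (2 * (1 + t / 3) * J)) ≤ exp (-(t ^ 2) / (3 * J)) := by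
  rw [exp_le_exp, neg_div, neg_div, neg_le_neg_iff]
  apply div_le_div_of_nonneg_left (sq_nonneg t) (by positivity)
  nlinarith

lemma exp_neg_sq_div_le_of_ge {t J : ℝ} (hJ : 0 < J) (ht : 6 / 7 ≤ t) :
    exp (-(t ^ 2) / (2 * (1 + t / 3) * J)) ≤ exp (-t / (3 * J)) := by
  rw [exp_le_exp, neg_div, neg_div, neg_le_neg_iff,
    div_le_div_iff₀ (by positivity) (by nlinarith)]
  nlinarith [mul_le_mul_of_nonneg_left ht (mul_nonneg (by linarith : (0 : ℝ) ≤ t) hJ.le)]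

lemma exp_neg_sq_div_le_add {t J : ℝ} (ht : 0 ≤ t) (hJ : 0 < J) :
    exp (-(t ^ 2) / (2 * (1 + t / 3) * J))
      ≤ exp (-(t ^ 2) / (3 * J)) + exp (-t / (3 * J)) := by
  rcases le_total t 1 with h | h
  · exact (exp_neg_sq_div_le_of_le ht hJ (by linarith)).trans
      (le_add_of_nonneg_right (exp_pos _).le)
  · exact (exp_neg_sq_div_le_of_ge hJ (by linarith)).trans
      (le_add_of_nonneg_left (exp_pos _).le)

/-- For every `J > 0`,
`∫_0^∞ exp(−t²/(2(1+t/3)J)) dt ≤ (√(3π)/2)√J + 3J`. -/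
theorem integral_exp_bound (J : ℝ) (hJ : 0 < J) :
    ∫ t in Set.Ioi (0 : ℝ), Real.exp (-(t ^ 2) / (2 * (1 + t / 3) * J))
      ≤ Real.sqrt (3 * Real.pi) / 2 * Real.sqrt J + 3 * J := by
  have h3J : 0 < 3 * J := by positivity
  calc ∫ t in Ioi (0 : ℝ), exp (-(t ^ 2) / (2 * (1 + t / 3) * J))
      ≤ ∫ t in Ioi (0 : ℝ), (exp (-(t ^ 2) / (3 * J)) + exp (-t / (3 * J))) := by
        refine integral_mono_of_nonneg (ae_of_all _ fun t => (exp_pos _).le)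
          ((integrableOn_exp_neg_sq_div_Ioi h3J).add (integrableOn_exp_neg_div_Ioi h3J)) ?_
        filter_upwards [ae_restrict_mem measurableSet_Ioi] with t ht
        exact exp_neg_sq_div_le_add (le_of_lt ht) hJ
    _ = √(π * (3 * J)) / 2 + 3 * J := by
        rw [integral_add (integrableOn_exp_neg_sq_div_Ioi h3J) (integrableOn_exp_neg_div_Ioi h3J),
          integral_exp_neg_sq_div_Ioi, integral_exp_neg_div_Ioi h3J]
    _ = √(3 * π) / 2 * √J + 3 * J := by
        rw [← mul_assoc, mul_comm π 3, sqrt_mul (by positivity)]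
        ring
end

section
/- Let V be a nonnegative real-valued random variable on a probability space and let J > 0. Suppose that for every t > 0, P(V ≥ 1 + t) ≤ exp( − t² / (2(1 + t/3)J) ). Then E[ max(V − 1, 0) ] ≤ (√(3π)/2)·√J + 3J. -/
/-!
Split the Bernstein exponent: for `t ≤ 3/2` it dominates `t² / (3J)`, for `t ≥ 3/2` it dominates
`t / (3J)`, so the tail is at most a Gaussian plus an exponential tail. By the layer-cake formula
`E[(V - 1)⁺] = ∫₀^∞ P(V ≥ 1 + t) dt`, and the two tails integrate to `√(3πJ)/2` and `3J`.
-/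

open MeasureTheory Real Set

lemma exp_bernstein_le_gaussian_add_exponential {J t : ℝ} (hJ : 0 < J) (ht : 0 ≤ t) :
    exp (-(t ^ 2) / (2 * (1 + t / 3) * J)) ≤ exp (-(t ^ 2) / (3 * J)) + exp (-t / (3 * J)) := by
  have hden : 0 < 2 * (1 + t / 3) * J := by positivity
  have h3J : 0 < 3 * J := by positivity
  rcases le_total t (3 / 2) with hsmall | hlarge
  · have hexp : -(t ^ 2) / (2 * (1 + t / 3) * J) ≤ -(t ^ 2) / (3 * J) := by
      rw [div_le_div_iff₀ hden h3J]
      nlinarith [mul_nonneg (mul_nonneg (sq_nonneg t) hJ.le) (by linarith : 0 ≤ 1 - 2 * t / 3)]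
    exact le_add_of_le_of_nonneg (exp_le_exp.2 hexp) (exp_pos _).le
  · have hexp : -(t ^ 2) / (2 * (1 + t / 3) * J) ≤ -t / (3 * J) := by
      rw [div_le_div_iff₀ hden h3J]
      nlinarith [mul_nonneg (mul_nonneg ht hJ.le) (by linarith : 0 ≤ 7 * t / 3 - 2)]
    exact le_add_of_nonneg_of_le (exp_pos _).le (exp_le_exp.2 hexp)

lemma integral_max_sub_zero_eq_integral_meas_le {α : Type*} [MeasurableSpace α] {μ : Measure α}
    [IsFiniteMeasure μ] {f : α → ℝ} (hf : Integrable f μ) (a : ℝ) :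
    ∫ ω, max (f ω - a) 0 ∂μ = ∫ t in Ioi 0, (μ {ω | a + t ≤ f ω}).toReal := by
  have hint : Integrable (fun ω ↦ f ω - a) μ := hf.sub (integrable_const a)
  rw [hint.pos_part.integral_eq_integral_meas_le (ae_of_all _ fun _ ↦ le_max_right _ _)]
  refine setIntegral_congr_fun measurableSet_Ioi fun t (ht : 0 < t) ↦ ?_
  have hlevel : {ω | t ≤ max (f ω - a) 0} = {ω | a + t ≤ f ω} := by
    ext ω
    simp only [mem_ofPred_eq, le_max_iff]
    constructor
    · rintro (h | h) <;> linarith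
    · intro h; left; linarith
  rw [measureReal_def, hlevel]

theorem expectation_pos_part_le_general
    {Ω : Type*} [MeasurableSpace Ω] (P : Measure Ω) [IsProbabilityMeasure P]
    (V : Ω → ℝ)
    (hVint : Integrable V P)
    (J : ℝ) (hJ : 0 < J)
    (htail : ∀ t : ℝ, 0 < t →
      (P {ω | 1 + t ≤ V ω}).toReal ≤ Real.exp (-(t ^ 2) / (2 * (1 + t / 3) * J))) :
    ∫ ω, max (V ω - 1) 0 ∂P ≤ Real.sqrt (3 * Real.pi) / 2 * Real.sqrt J + 3 * J := by
  have h3J : 0 < 3 * J := by positivity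
  have hgauss : IntegrableOn (fun t ↦ exp (-(t ^ 2) / (3 * J))) (Ioi 0) :=
    .of_integral_ne_zero (by rw [integral_exp_neg_sq_div_Ioi (3 * J)]; positivity)
  have hexp : IntegrableOn (fun t ↦ exp (-t / (3 * J))) (Ioi 0) :=
    .of_integral_ne_zero (by rw [integral_exp_neg_div_Ioi h3J]; positivity)
  calc ∫ ω, max (V ω - 1) 0 ∂P = ∫ t in Ioi 0, (P {ω | 1 + t ≤ V ω}).toReal :=
        integral_max_sub_zero_eq_integral_meas_le hVint 1
    _ ≤ ∫ t in Ioi 0, (exp (-(t ^ 2) / (3 * J)) + exp (-t / (3 * J))) :=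
        integral_mono_of_nonneg (ae_of_all _ fun _ ↦ ENNReal.toReal_nonneg) (hgauss.add hexp) <|
          (ae_restrict_mem measurableSet_Ioi).mono fun t (ht : 0 < t) ↦
            (htail t ht).trans (exp_bernstein_le_gaussian_add_exponential hJ ht.le)
    _ = √(3 * π) / 2 * √J + 3 * J := by
        rw [integral_add hgauss hexp, integral_exp_neg_sq_div_Ioi (3 * J), integral_exp_neg_div_Ioi h3J,
          ← mul_assoc, mul_comm π 3, sqrt_mul (by positivity)]
        ring

/-- If `V ≥ 0` is an integrable random variable such that for every `t > 0`,
`P(V ≥ 1 + t) ≤ exp(−t²/(2(1+t/3)J))`, then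
`E[max (V − 1) 0] ≤ (√(3π)/2)√J + 3J`. -/
theorem expectation_pos_part_le
    {Ω : Type*} [MeasurableSpace Ω] (P : Measure Ω) [IsProbabilityMeasure P]
    (V : Ω → ℝ) (hVmeas : Measurable V) (hV0 : ∀ ω, 0 ≤ V ω)
    (hVint : Integrable V P)
    (J : ℝ) (hJ : 0 < J)
    (htail : ∀ t : ℝ, 0 < t →
      (P {ω | 1 + t ≤ V ω}).toReal ≤ Real.exp (-(t ^ 2) / (2 * (1 + t / 3) * J))) :
    ∫ ω, max (V ω - 1) 0 ∂P ≤ Real.sqrt (3 * Real.pi) / 2 * Real.sqrt J + 3 * J :=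
  expectation_pos_part_le_general P V hVint J hJ htail
end
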